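/- arXiv:1008.1081 — 2 statements merged into one kernel-verified Lean document; each statement's English description precedes it below -/
import Mathlib

section
/- (Theorem 5.5, definition and holomorphy of the M-function.) Let Ã ∈ M be closed, corresponding to T : V → W, and let ρ(Ã) := {λ ∈ ℂ : Ã − λ : D(Ã) → H is bijective with bounded inverse}. For each λ ∈ ρ(Ã), the formula M(λ) := pr_ζ ∘ (I − (Ã − λ)^{-1}(A_max − λ)) ∘ A_γ^{-1} ∘ i_W, where pr_ζ u := u_ζ for u ∈ D(A_max), defines a bounded linear operator from W into V, and the map λ ↦ M(λ) is holomorphic (complex differentiable) on the open set ρ(Ã) with values in the Banach space of bounded operators from W to V. -/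
noncomputable section

open Filter Topology

namespace GrubbExt

variable {H : Type*} [NormedAddCommGroup H] [InnerProductSpace ℂ H] [CompleteSpace H]

/-- The inclusion of a closed subspace composed with the orthogonal projection onto it,
as a continuous linear map `H →L[ℂ] H`.  This is `i_K ∘ pr_K` in the notation of the paper. -/
def projCl (K : Submodule ℂ H) (hK : IsClosed (K : Set H)) : H →L[ℂ] H :=
  haveI : CompleteSpace K := hK.completeSpace_coe
  K.subtypeL.comp K.orthogonalProjection

/-- `R` is the (everywhere defined, bounded) inverse of `P - lam`. -/
structure IsResolvent (P : H →ₗ.[ℂ] H) (lam : ℂ) (R : H →L[ℂ] H) : Prop where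
  mem : ∀ f : H, R f ∈ P.domain
  left : ∀ u : P.domain, R (P u - lam • (u : H)) = u
  right : ∀ f : H, P ⟨R f, mem f⟩ - lam • R f = f

/-- `E^λ := I + λ(A_γ - λ)^{-1}`, given the resolvent `R = (A_γ - λ)^{-1}`. -/
def Eop (lam : ℂ) (R : H →L[ℂ] H) : H →L[ℂ] H := ContinuousLinearMap.id ℂ H + lam • R

/-- `E'^{λ̄} := I + λ̄(A_γ^* - λ̄)^{-1}`, given the resolvent `R' = (A_γ^* - λ̄)^{-1}`. -/
def Eop' (lam : ℂ) (R' : H →L[ℂ] H) : H →L[ℂ] H :=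
  ContinuousLinearMap.id ℂ H + (starRingEnd ℂ lam) • R'

/-- The resolvent set of a partially defined operator. -/
def resSet (P : H →ₗ.[ℂ] H) : Set ℂ := {lam | ∃ R : H →L[ℂ] H, IsResolvent P lam R}

/-- The set of "Rayleigh quotients" `Re⟨Pu,u⟩` over unit vectors `u` in the domain of `P`;
the lower bound `m(P)` is the infimum of this set. -/
def raySet (P : H →ₗ.[ℂ] H) : Set ℝ :=
  {r | ∃ u : P.domain, ‖(u : H)‖ = 1 ∧ r = (inner ℂ (P u) (u : H) : ℂ).re}

/-- The abstract set-up of Grubb's extension theory: a dual pair `A_min, A'_min` of closed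
densely defined operators in a Hilbert space `H`, together with a reference operator `A_γ`
lying between `A_min` and `A_max := (A'_min)*`, which is bijective with bounded inverse
(and whose adjoint is likewise bijective with bounded inverse). -/
structure Setup (H : Type*) [NormedAddCommGroup H] [InnerProductSpace ℂ H]
    [CompleteSpace H] where
  Amin : H →ₗ.[ℂ] H
  Amin' : H →ₗ.[ℂ] H
  closed_Amin : IsClosed (Amin.graph : Set (H × H))
  closed_Amin' : IsClosed (Amin'.graph : Set (H × H))
  dense_Amin : Dense (Amin.domain : Set H)
  dense_Amin' : Dense (Amin'.domain : Set H)
  Amin_le_max : Amin ≤ Amin'.adjoint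
  Amin'_le_max' : Amin' ≤ Amin.adjoint
  Agam : H →ₗ.[ℂ] H
  Amin_le_Agam : Amin ≤ Agam
  Agam_le_max : Agam ≤ Amin'.adjoint
  Agaminv : H →L[ℂ] H
  Agaminv_mem : ∀ f : H, Agaminv f ∈ Agam.domain
  Agaminv_left : ∀ u : Agam.domain, Agaminv (Agam u) = u
  Agaminv_right : ∀ f : H, Agam ⟨Agaminv f, Agaminv_mem f⟩ = f
  Agamstarinv : H →L[ℂ] H
  Agamstarinv_mem : ∀ f : H, Agamstarinv f ∈ Agam.adjoint.domain
  Agamstarinv_left : ∀ v : Agam.adjoint.domain, Agamstarinv (Agam.adjoint v) = v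
  Agamstarinv_right : ∀ f : H, Agam.adjoint ⟨Agamstarinv f, Agamstarinv_mem f⟩ = f

namespace Setup

variable (S : Setup H)

/-- `A_max := (A'_min)*`. -/
def Amax : H →ₗ.[ℂ] H := S.Amin'.adjoint

/-- `A'_max := (A_min)*`. -/
def Amax' : H →ₗ.[ℂ] H := S.Amin.adjoint

/-- `u_ζ := u - A_γ^{-1} A_max u`, the nullspace component of `u ∈ D(A_max)`. -/
def uzeta (u : S.Amax.domain) : H := (u : H) - S.Agaminv (S.Amax u)

/-- `v_{ζ'} := v - (A_γ^*)^{-1} A'_max v`, the nullspace component of `v ∈ D(A'_max)`. -/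
def vzeta (v : S.Amax'.domain) : H := (v : H) - S.Agamstarinv (S.Amax' v)

/-- `Z := ker A_max`, as a submodule of `H`. -/
def Zker : Submodule ℂ H := (LinearMap.ker S.Amax.toFun).map S.Amax.domain.subtype

/-- `Z' := ker A'_max`, as a submodule of `H`. -/
def Zker' : Submodule ℂ H := (LinearMap.ker S.Amax'.toFun).map S.Amax'.domain.subtype

lemma coe_Zker :
    (S.Zker : Set H) = ⋂ v : S.Amin'.domain, {y : H | (inner ℂ y (S.Amin' v) : ℂ) = 0} := by
  ext y
  simp only [Set.mem_iInter, Set.mem_setOf_eq, SetLike.mem_coe, Zker, Submodule.mem_map,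
    LinearMap.mem_ker]
  constructor
  · rintro ⟨u, hu, rfl⟩ v
    have h := (LinearPMap.adjoint_isFormalAdjoint S.dense_Amin') u v
    have hu' : S.Amin'.adjoint u = 0 := hu
    rw [hu'] at h
    simpa using h.symm
  · intro h
    have hmem : y ∈ S.Amax.domain := by
      refine LinearPMap.mem_adjoint_domain_of_exists _ ⟨0, fun x => ?_⟩
      simp [h x]
    refine ⟨⟨y, hmem⟩, ?_, rfl⟩
    exact LinearPMap.adjoint_apply_eq S.dense_Amin' ⟨y, hmem⟩ fun x => by simp [h x]

lemma isClosed_Zker : IsClosed (S.Zker : Set H) := by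
  rw [S.coe_Zker]
  exact isClosed_iInter fun v =>
    isClosed_eq (Continuous.inner continuous_id continuous_const) continuous_const

lemma coe_Zker' :
    (S.Zker' : Set H) = ⋂ v : S.Amin.domain, {y : H | (inner ℂ y (S.Amin v) : ℂ) = 0} := by
  ext y
  simp only [Set.mem_iInter, Set.mem_setOf_eq, SetLike.mem_coe, Zker', Submodule.mem_map,
    LinearMap.mem_ker]
  constructor
  · rintro ⟨u, hu, rfl⟩ v
    have h := (LinearPMap.adjoint_isFormalAdjoint S.dense_Amin) u v
    have hu' : S.Amin.adjoint u = 0 := hu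
    rw [hu'] at h
    simpa using h.symm
  · intro h
    have hmem : y ∈ S.Amax'.domain := by
      refine LinearPMap.mem_adjoint_domain_of_exists _ ⟨0, fun x => ?_⟩
      simp [h x]
    refine ⟨⟨y, hmem⟩, ?_, rfl⟩
    exact LinearPMap.adjoint_apply_eq S.dense_Amin ⟨y, hmem⟩ fun x => by simp [h x]

lemma isClosed_Zker' : IsClosed (S.Zker' : Set H) := by
  rw [S.coe_Zker']
  exact isClosed_iInter fun v =>
    isClosed_eq (Continuous.inner continuous_id continuous_const) continuous_const

/-- The orthogonal projection onto `Z = ker A_max`. -/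
def projZ : H →L[ℂ] H := projCl S.Zker S.isClosed_Zker

/-- The orthogonal projection onto `Z' = ker A'_max`. -/
def projZ' : H →L[ℂ] H := projCl S.Zker' S.isClosed_Zker'

variable (At : H →ₗ.[ℂ] H)

/-- `D(T) = {u_ζ : u ∈ D(Ã)}`, the set of nullspace components of elements of `D(Ã)`. -/
def dzeta : Set H := {x | ∃ u : S.Amax.domain, (u : H) ∈ At.domain ∧ x = S.uzeta u}

/-- `{v_{ζ'} : v ∈ D(Ã*)}`. -/
def dzeta' : Set H := {x | ∃ v : S.Amax'.domain, (v : H) ∈ At.adjoint.domain ∧ x = S.vzeta v}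

/-- `V := closure {u_ζ : u ∈ D(Ã)}`. -/
def Vsub : Submodule ℂ H := (Submodule.span ℂ (S.dzeta At)).topologicalClosure

/-- `W := closure {v_{ζ'} : v ∈ D(Ã*)}`. -/
def Wsub : Submodule ℂ H := (Submodule.span ℂ (S.dzeta' At)).topologicalClosure

lemma isClosed_Vsub : IsClosed ((S.Vsub At : Set H)) :=
  Submodule.isClosed_topologicalClosure _

lemma isClosed_Wsub : IsClosed ((S.Wsub At : Set H)) :=
  Submodule.isClosed_topologicalClosure _

/-- The orthogonal projection onto `V`. -/
def projV : H →L[ℂ] H := projCl (S.Vsub At) (S.isClosed_Vsub At)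

/-- The orthogonal projection onto `W`. -/
def projW : H →L[ℂ] H := projCl (S.Wsub At) (S.isClosed_Wsub At)

/-- The set `{(u_ζ, pr_W (A_max u)) : u ∈ D(Ã)}`, for a general closed subspace `W`. -/
def TgraphOn (W : Submodule ℂ H) (hW : IsClosed (W : Set H)) : Set (H × H) :=
  {p | ∃ u : S.Amax.domain, (u : H) ∈ At.domain ∧ p.1 = S.uzeta u ∧
    p.2 = projCl W hW (S.Amax u)}

/-- The graph of the operator `T : V → W` corresponding to `Ã`. -/
def Tgraph : Set (H × H) := S.TgraphOn At (S.Wsub At) (S.isClosed_Wsub At)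


/-- `F^λ := I - λ A_γ^{-1}`. -/
def Fop (lam : ℂ) : H →L[ℂ] H := ContinuousLinearMap.id ℂ H - lam • S.Agaminv

/-- `F'^{λ̄} := I - λ̄ (A_γ^*)^{-1}`. -/
def Fop' (lam : ℂ) : H →L[ℂ] H := ContinuousLinearMap.id ℂ H - (starRingEnd ℂ lam) • S.Agamstarinv

/-- `Z_λ := ker(A_max - λ)`, as a subset of `H`. -/
def ZkerL (lam : ℂ) : Set H :=
  {x | ∃ hx : x ∈ S.Amax.domain, S.Amax ⟨x, hx⟩ = lam • x}

/-- `Z'_{λ̄} := ker(A'_max - λ̄)`, as a subset of `H`. -/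
def ZkerL' (lam : ℂ) : Set H :=
  {x | ∃ hx : x ∈ S.Amax'.domain, S.Amax' ⟨x, hx⟩ = (starRingEnd ℂ lam) • x}

/-- `pr^λ_ζ u := u - (A_γ - λ)^{-1}(A_max - λ)u`, given the resolvent `R = (A_γ - λ)^{-1}`. -/
def uzetaL (lam : ℂ) (R : H →L[ℂ] H) (u : S.Amax.domain) : H :=
  (u : H) - R (S.Amax u - lam • (u : H))

/-- `pr^{λ̄}_{ζ'} v := v - (A_γ^* - λ̄)^{-1}(A'_max - λ̄)v`,
given the resolvent `R' = (A_γ^* - λ̄)^{-1}`. -/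
def vzetaL (lam : ℂ) (R' : H →L[ℂ] H) (v : S.Amax'.domain) : H :=
  (v : H) - R' (S.Amax' v - (starRingEnd ℂ lam) • (v : H))

/-- `D(T^λ) = {pr^λ_ζ u : u ∈ D(Ã)}`. -/
def dzetaL (lam : ℂ) (R : H →L[ℂ] H) : Set H :=
  {x | ∃ u : S.Amax.domain, (u : H) ∈ At.domain ∧ x = S.uzetaL lam R u}

/-- `{pr^{λ̄}_{ζ'} v : v ∈ D(Ã*)}`. -/
def dzetaL' (lam : ℂ) (R' : H →L[ℂ] H) : Set H :=
  {x | ∃ v : S.Amax'.domain, (v : H) ∈ At.adjoint.domain ∧ x = S.vzetaL lam R' v}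

/-- `V_λ := closure {pr^λ_ζ u : u ∈ D(Ã)}`. -/
def VLsub (lam : ℂ) (R : H →L[ℂ] H) : Submodule ℂ H :=
  (Submodule.span ℂ (S.dzetaL At lam R)).topologicalClosure

/-- `W_{λ̄} := closure {pr^{λ̄}_{ζ'} v : v ∈ D(Ã*)}`. -/
def WLsub (lam : ℂ) (R' : H →L[ℂ] H) : Submodule ℂ H :=
  (Submodule.span ℂ (S.dzetaL' At lam R')).topologicalClosure

lemma isClosed_WLsub (lam : ℂ) (R' : H →L[ℂ] H) : IsClosed ((S.WLsub At lam R' : Set H)) :=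
  Submodule.isClosed_topologicalClosure _

/-- The orthogonal projection onto `W_{λ̄}`. -/
def projWL (lam : ℂ) (R' : H →L[ℂ] H) : H →L[ℂ] H :=
  projCl (S.WLsub At lam R') (S.isClosed_WLsub At lam R')

/-- The graph of the operator `T^λ : V_λ → W_{λ̄}` corresponding to `Ã - λ`:
`{(pr^λ_ζ u, pr_{W_{λ̄}}((A_max - λ)u)) : u ∈ D(Ã)}`. -/
def TgraphL (lam : ℂ) (R R' : H →L[ℂ] H) : Set (H × H) :=
  {p | ∃ u : S.Amax.domain, (u : H) ∈ At.domain ∧ p.1 = S.uzetaL lam R u ∧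
    p.2 = S.projWL At lam R' (S.Amax u - lam • (u : H))}

/-- `G^λ_{V,W} x := -pr_W (λ E^λ x)`, where `W = W(Ã)`. -/
def Gval (lam : ℂ) (R : H →L[ℂ] H) (x : H) : H :=
  -(S.projW At (lam • Eop lam R x))

/-- `G^μ_{Z,Z} z := -pr_Z (μ E^μ z)`. -/
def GZval (lam : ℂ) (R : H →L[ℂ] H) (x : H) : H :=
  -(S.projZ (lam • Eop lam R x))

lemma mem_Amax_res {lam : ℂ} {Rt : H →L[ℂ] H} (h2 : At ≤ S.Amax)
    (hRt : IsResolvent At lam Rt) (w : H) :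
    S.Agaminv w - Rt (w - lam • S.Agaminv w) ∈ S.Amax.domain :=
  Submodule.sub_mem _ (S.Agam_le_max.1 (S.Agaminv_mem w)) (h2.1 (hRt.mem _))

/-- `M(λ) w := pr_ζ ((I - (Ã - λ)^{-1}(A_max - λ)) A_γ^{-1} w)`, the value of the abstract
`M`-function on `w`. -/
def Mval {lam : ℂ} {Rt : H →L[ℂ] H} (h2 : At ≤ S.Amax) (hRt : IsResolvent At lam Rt)
    (w : H) : H :=
  S.uzeta ⟨S.Agaminv w - Rt (w - lam • S.Agaminv w), S.mem_Amax_res At h2 hRt w⟩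

end Setup

/-! `M(λ) = F^λ (A_γ^{-1} - (Ã - λ)^{-1} F^λ)` with `F^λ = I - λ A_γ^{-1}`. Indeed, for `w ∈ H`
the vector `u = A_γ^{-1} w - (Ã - λ)^{-1} F^λ w` lies in `ker(A_max - λ)`, on which `pr_ζ = F^λ`;
and since `A_γ^{-1} w` has no `ζ`-part, `M(λ) w = -pr_ζ (Ã - λ)^{-1} F^λ w` lies in `V`.
Holomorphy thus reduces to that of the resolvent, which near `λ₀` is the Neumann series
`(Ã - λ)^{-1} = (Ã - λ₀)^{-1} (I - (λ - λ₀)(Ã - λ₀)^{-1})^{-1}`. -/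

section Resolvent

variable {P : H →ₗ.[ℂ] H}

omit [CompleteSpace H] in
theorem IsResolvent.unique {lam : ℂ} {R₁ R₂ : H →L[ℂ] H}
    (h₁ : IsResolvent P lam R₁) (h₂ : IsResolvent P lam R₂) : R₁ = R₂ := by
  ext f
  simpa only [h₂.right f] using h₁.left ⟨R₂ f, h₂.mem f⟩

omit [CompleteSpace H] in
theorem IsResolvent.mul_inverse_one_sub {lam₀ lam : ℂ} {R₀ : H →L[ℂ] H}
    (h : IsResolvent P lam₀ R₀) (e : (H →L[ℂ] H)ˣ)
    (he : (e : H →L[ℂ] H) = 1 - (lam - lam₀) • R₀) :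
    IsResolvent P lam (R₀ * ↑e⁻¹) where
  mem f := h.mem _
  left u := by
    have hshift : P u - lam • (u : H) = (e : H →L[ℂ] H) (P u - lam₀ • (u : H)) := by
      rw [he]
      simp only [sub_apply, one_apply_eq_self, smul_apply, h.left u]
      module
    rw [hshift]
    change R₀ ((↑e⁻¹ * ↑e : H →L[ℂ] H) _) = _
    rw [e.inv_mul, one_apply_eq_self, h.left u]
  right f := by
    set g := (↑e⁻¹ : H →L[ℂ] H) f
    have hg : g - (lam - lam₀) • R₀ g = f := by
      simpa [he] using congrArg (· f) e.mul_inv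
    have hP : P ⟨R₀ g, h.mem g⟩ = g + lam₀ • R₀ g := sub_eq_iff_eq_add.mp (h.right g)
    change P ⟨R₀ g, h.mem g⟩ - lam • R₀ g = f
    rw [hP, ← hg]
    module

lemma norm_smul_lt_one_of_mem_ball {lam₀ lam : ℂ} (R : H →L[ℂ] H)
    (hlam : lam ∈ Metric.ball lam₀ (‖R‖ + 1)⁻¹) : ‖(lam - lam₀) • R‖ < 1 := by
  rw [Metric.mem_ball, dist_eq_norm] at hlam
  rw [norm_smul]
  calc ‖lam - lam₀‖ * ‖R‖ ≤ ‖lam - lam₀‖ * (‖R‖ + 1) := by gcongr; linarith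
    _ < (‖R‖ + 1)⁻¹ * (‖R‖ + 1) := by gcongr
    _ = 1 := by field_simp

variable (P) in
/-- The resolvent `(P - λ)^{-1}` on `resSet P`, and `0` off it. -/
def resolvent (lam : ℂ) : H →L[ℂ] H :=
  open Classical in if h : lam ∈ resSet P then h.choose else 0

omit [CompleteSpace H] in
lemma isResolvent_resolvent {lam : ℂ} (h : lam ∈ resSet P) :
    IsResolvent P lam (resolvent P lam) := by
  rw [resolvent, dif_pos h]
  exact h.choose_spec

lemma resolvent_eventuallyEq {lam₀ : ℂ} (h : lam₀ ∈ resSet P) :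
    ∀ᶠ lam in 𝓝 lam₀, lam ∈ resSet P ∧ resolvent P lam =
      resolvent P lam₀ * Ring.inverse (1 - (lam - lam₀) • resolvent P lam₀) := by
  set R₀ := resolvent P lam₀
  filter_upwards [Metric.ball_mem_nhds lam₀ (by positivity : (0 : ℝ) < (‖R₀‖ + 1)⁻¹)]
    with lam hlam
  have hlt := norm_smul_lt_one_of_mem_ball R₀ hlam
  have hres := (isResolvent_resolvent h).mul_inverse_one_sub (Units.oneSub _ hlt) rfl
  refine ⟨⟨_, hres⟩, ?_⟩
  rw [(isResolvent_resolvent ⟨_, hres⟩).unique hres, NormedRing.inverse_one_sub _ hlt]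

theorem isOpen_resSet : IsOpen (resSet P) :=
  isOpen_iff_mem_nhds.mpr fun _ h => (resolvent_eventuallyEq h).mono fun _ hlam => hlam.1

theorem differentiableOn_resolvent : DifferentiableOn ℂ (resolvent P) (resSet P) := by
  intro lam₀ h
  refine DifferentiableAt.differentiableWithinAt ?_
  set R₀ := resolvent P lam₀
  have hunit : IsUnit ((1 : H →L[ℂ] H) - (lam₀ - lam₀) • R₀) := by simp
  have hneumann : DifferentiableAt ℂ
      (fun lam : ℂ => R₀ * Ring.inverse (1 - (lam - lam₀) • R₀ : H →L[ℂ] H)) lam₀ :=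
    (differentiableAt_const R₀).mul <| DifferentiableAt.inverse (by fun_prop) hunit
  exact hneumann.congr_of_eventuallyEq <| (resolvent_eventuallyEq h).mono fun _ hlam => hlam.2

end Resolvent

namespace Setup

variable (S : Setup H)

lemma Agam_le_Amax : S.Agam ≤ S.Amax := S.Agam_le_max

lemma Amax_Agaminv (w : H) :
    S.Amax ⟨S.Agaminv w, S.Agam_le_Amax.1 (S.Agaminv_mem w)⟩ = w := by
  rw [← S.Agam_le_Amax.2 (x := ⟨S.Agaminv w, S.Agaminv_mem w⟩) rfl]
  exact S.Agaminv_right w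

lemma uzeta_sub (u v : S.Amax.domain) : S.uzeta (u - v) = S.uzeta u - S.uzeta v := by
  simp only [uzeta, LinearPMap.map_sub, map_sub, Submodule.coe_sub]
  abel

lemma uzeta_Agaminv (w : H) :
    S.uzeta ⟨S.Agaminv w, S.Agam_le_Amax.1 (S.Agaminv_mem w)⟩ = 0 := by
  rw [uzeta, Amax_Agaminv, sub_self]

lemma uzeta_of_Amax_eq_smul {lam : ℂ} {u : S.Amax.domain} (hu : S.Amax u = lam • (u : H)) :
    S.uzeta u = S.Fop lam u := by
  simp [uzeta, Fop, hu]

lemma differentiable_Fop : Differentiable ℂ S.Fop := by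
  unfold Fop
  fun_prop

variable {S} {At : H →ₗ.[ℂ] H} (h2 : At ≤ S.Amax) {lam : ℂ} {Rt : H →L[ℂ] H}
  (hRt : IsResolvent At lam Rt)

lemma Amax_resolvent_apply (f : H) : S.Amax ⟨Rt f, h2.1 (hRt.mem f)⟩ = f + lam • Rt f := by
  rw [← h2.2 (x := ⟨Rt f, hRt.mem f⟩) rfl, ← sub_eq_iff_eq_add]
  exact hRt.right f

lemma Mval_eq_Fop (w : H) :
    S.Mval At h2 hRt w = S.Fop lam (S.Agaminv w - Rt (S.Fop lam w)) := by
  have hFw : S.Fop lam w = w - lam • S.Agaminv w := rfl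
  refine (S.uzeta_of_Amax_eq_smul ?_).trans (by rw [hFw])
  change S.Amax (⟨_, S.Agam_le_Amax.1 (S.Agaminv_mem w)⟩ - ⟨_, h2.1 (hRt.mem _)⟩) = _
  rw [LinearPMap.map_sub, Amax_Agaminv, Amax_resolvent_apply h2 hRt]
  module

lemma Mval_mem_Vsub (w : H) : S.Mval At h2 hRt w ∈ S.Vsub At := by
  change S.uzeta (⟨_, S.Agam_le_Amax.1 (S.Agaminv_mem w)⟩ - ⟨_, h2.1 (hRt.mem _)⟩) ∈ _
  rw [uzeta_sub, uzeta_Agaminv, zero_sub]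
  exact Submodule.neg_mem _ <| Submodule.le_topologicalClosure _ <|
    Submodule.subset_span ⟨_, hRt.mem _, rfl⟩

end Setup

theorem statement_13_general (S : Setup H) (At : H →ₗ.[ℂ] H)
    (h2 : At ≤ S.Amax) :
    ∃ Mf : ℂ → (H →L[ℂ] H),
      (∀ (lam : ℂ) (Rt : H →L[ℂ] H) (hRt : IsResolvent At lam Rt),
        ∀ w : H, w ∈ S.Wsub At →
          Mf lam w = S.Mval At h2 hRt w ∧ Mf lam w ∈ S.Vsub At) ∧
      IsOpen (resSet At) ∧ DifferentiableOn ℂ Mf (resSet At) := by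
  refine ⟨fun lam => S.Fop lam * (S.Agaminv - resolvent At lam * S.Fop lam), ?_,
    isOpen_resSet, ?_⟩
  · intro lam Rt hRt w _
    have hMf : (S.Fop lam * (S.Agaminv - resolvent At lam * S.Fop lam)) w =
        S.Mval At h2 hRt w := by
      rw [(isResolvent_resolvent ⟨Rt, hRt⟩).unique hRt, Setup.Mval_eq_Fop h2 hRt]
      rfl
    exact ⟨hMf, hMf ▸ Setup.Mval_mem_Vsub h2 hRt w⟩
  · have hFop := S.differentiable_Fop.differentiableOn (s := resSet At)
    exact hFop.mul ((differentiableOn_const _).sub (differentiableOn_resolvent.mul hFop))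

theorem statement_13 (S : Setup H) (At : H →ₗ.[ℂ] H)
    (h1 : S.Amin ≤ At) (h2 : At ≤ S.Amax)
    (hcl : IsClosed (At.graph : Set (H × H)))
    (T : H →ₗ.[ℂ] H) (hT : (T.graph : Set (H × H)) = S.Tgraph At) :
    ∃ Mf : ℂ → (H →L[ℂ] H),
      (∀ (lam : ℂ) (Rt : H →L[ℂ] H) (hRt : IsResolvent At lam Rt),
        ∀ w : H, w ∈ S.Wsub At →
          Mf lam w = S.Mval At h2 hRt w ∧ Mf lam w ∈ S.Vsub At) ∧
      IsOpen (resSet At) ∧ DifferentiableOn ℂ Mf (resSet At) :=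
  statement_13_general S At h2

end GrubbExt
end
end

section
/- (Boundary triple property.) Define Γ₁ u := pr_{Z'}(A_max u) and Γ₀ u := u_ζ for u ∈ D(A_max), and Γ'₁ v := pr_Z(A'_max v) and Γ'₀ v := v_{ζ'} for v ∈ D(A'_max). Then: (i) the map u ↦ (Γ₁ u, Γ₀ u) from D(A_max) to Z' × Z is surjective and its kernel is exactly D(A_min); (ii) the map v ↦ (Γ'₁ v, Γ'₀ v) from D(A'_max) to Z × Z' is surjective and its kernel is exactly D(A'_min); (iii) for all u ∈ D(A_max) and v ∈ D(A'_max): ⟨A_max u, v⟩ − ⟨u, A'_max v⟩ = ⟨Γ₁ u, Γ'₀ v⟩ − ⟨Γ₀ u, Γ'₁ v⟩. -/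
noncomputable section

open Filter Topology

namespace GrubbExt

variable {H : Type*} [NormedAddCommGroup H] [InnerProductSpace ℂ H] [CompleteSpace H]

/-!
Every `u ∈ D(A_max)` splits as `u = u_γ + u_ζ` with `u_ζ ∈ Z`, and since `A_γ⁻¹` and
`(A_γ*)⁻¹` are adjoint to each other, `⟪A_max u, v_γ'⟫ = ⟪u_γ, A'_max v⟫`; expanding both
sides of (iii) along these splittings leaves exactly the `ζ`-terms, which only see the
components in `Z'` and `Z`. Surjectivity in (i) is witnessed by `u = A_γ⁻¹ z' + z`. If both
boundary values of `u` vanish, (iii) shows that `u ∈ D(A_min**)`, which is `D(A_min)` as `A_min`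
is closed. Part (ii) is part (i) for the dual setup, obtained by exchanging `A_min ↔ A'_min` and
`A_γ ↔ A_γ*`; this uses `A_γ** = A_γ`, `A_γ` being closed since it has a bounded inverse.
-/

section Projection

variable (K : Submodule ℂ H) (hK : IsClosed (K : Set H))

lemma projCl_eq_starProjection :
    haveI : CompleteSpace K := hK.completeSpace_coe
    projCl K hK = K.starProjection :=
  rfl

variable {K}

lemma projCl_apply_of_mem {x : H} (hx : x ∈ K) : projCl K hK x = x := by
  have : CompleteSpace K := hK.completeSpace_coe
  rw [projCl_eq_starProjection, K.starProjection_eq_self_iff.mpr hx]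

lemma projCl_apply_eq_zero_iff {x : H} : projCl K hK x = 0 ↔ x ∈ Kᗮ := by
  have : CompleteSpace K := hK.completeSpace_coe
  rw [projCl_eq_starProjection, K.starProjection_apply_eq_zero_iff]

lemma inner_projCl_left_of_mem (x : H) {w : H} (hw : w ∈ K) :
    inner ℂ (projCl K hK x) w = inner ℂ x w := by
  have : CompleteSpace K := hK.completeSpace_coe
  rw [projCl_eq_starProjection, K.inner_starProjection_left_eq_right,
    K.starProjection_eq_self_iff.mpr hw]

lemma inner_projCl_right_of_mem (x : H) {w : H} (hw : w ∈ K) :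
    inner ℂ w (projCl K hK x) = inner ℂ w x := by
  have : CompleteSpace K := hK.completeSpace_coe
  rw [projCl_eq_starProjection, ← K.inner_starProjection_left_eq_right,
    K.starProjection_eq_self_iff.mpr hw]

end Projection

lemma _root_.LinearPMap.apply_eq_of_le {R E F : Type*} [Ring R] [AddCommGroup E] [Module R E]
    [AddCommGroup F] [Module R F] {f g : E →ₗ.[R] F} (h : f ≤ g) (x : f.domain) :
    f x = g ⟨x, h.1 x.2⟩ :=
  h.2 rfl

section ClosedOperator

variable {𝕜 E F : Type*} [RCLike 𝕜] [NormedAddCommGroup E] [InnerProductSpace 𝕜 E]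
  [CompleteSpace E] [NormedAddCommGroup F] [InnerProductSpace 𝕜 F] [CompleteSpace F]

open scoped InnerProductSpace LinearPMap

-- `T†† ⊆ T`: the closed graph `G` of `T` equals `Gᗮᗮ`, and `(a, b) ∈ Gᗮ` means `T† b = -a`.
theorem _root_.LinearPMap.mem_graph_of_inner_adjoint_eq {T : E →ₗ.[𝕜] F} (hT : T.IsClosed)
    (hd : Dense (T.domain : Set E)) {u : E} {f : F}
    (h : ∀ v : T†.domain, ⟪T† v, u⟫_𝕜 = ⟪(v : F), f⟫_𝕜) : (u, f) ∈ T.graph := by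
  let G : Submodule 𝕜 (WithLp 2 (E × F)) :=
    T.graph.comap (WithLp.linearEquiv 2 𝕜 (E × F)).toLinearMap
  have hG : _root_.IsClosed (G : Set (WithLp 2 (E × F))) :=
    hT.preimage (WithLp.prod_continuous_ofLp 2 E F)
  suffices WithLp.toLp 2 (u, f) ∈ Gᗮᗮ by
    rwa [Submodule.orthogonal_orthogonal_eq_closure, hG.submodule_topologicalClosure_eq] at this
  refine (Submodule.mem_orthogonal _ _).mpr fun w hw => ?_
  have hw' : ∀ x : T.domain, ⟪-w.fst, (x : E)⟫_𝕜 = ⟪w.snd, T x⟫_𝕜 := fun x => by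
    have := (Submodule.mem_orthogonal' _ _).mp hw (WithLp.toLp 2 ((x : E), T x)) (T.mem_graph x)
    simp only [WithLp.prod_inner_apply, WithLp.ofLp_fst, WithLp.ofLp_snd] at this
    rw [inner_neg_left]
    linear_combination -this
  have hdom : w.snd ∈ T†.domain := LinearPMap.mem_adjoint_domain_of_exists _ ⟨_, hw'⟩
  have hadj : T† ⟨w.snd, hdom⟩ = -w.fst := LinearPMap.adjoint_apply_eq hd _ hw'
  have := h ⟨w.snd, hdom⟩
  rw [hadj, inner_neg_left] at this
  rw [WithLp.prod_inner_apply]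
  simp only [WithLp.ofLp_fst, WithLp.ofLp_snd]
  linear_combination -this

end ClosedOperator

namespace Setup

open scoped LinearPMap

variable (S : Setup H)

lemma Amin_le_Amax : S.Amin ≤ S.Amax := S.Amin_le_Agam.trans S.Agam_le_max

lemma dense_Agam : Dense (S.Agam.domain : Set H) := S.dense_Amin.mono S.Amin_le_Agam.1

lemma isClosed_Agam : S.Agam.IsClosed := by
  have hgraph : (S.Agam.graph : Set (H × H)) = {p | p.1 = S.Agaminv p.2} := by
    ext ⟨x, y⟩
    refine ⟨fun hxy => ?_, fun (hx : x = S.Agaminv y) => ?_⟩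
    · obtain ⟨x, rfl, rfl⟩ := S.Agam.mem_graph_iff.mp hxy
      exact (S.Agaminv_left x).symm
    · subst hx
      have := S.Agam.mem_graph ⟨_, S.Agaminv_mem y⟩
      rwa [S.Agaminv_right] at this
  rw [LinearPMap.IsClosed, hgraph]
  exact isClosed_eq continuous_fst (S.Agaminv.continuous.comp continuous_snd)

lemma Agam_adjoint_le_Amax' : S.Agam† ≤ S.Amax' := by
  refine LinearPMap.IsFormalAdjoint.le_adjoint S.dense_Amin fun x y => ?_
  rw [LinearPMap.apply_eq_of_le S.Amin_le_Agam, ← inner_conj_symm,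
    ← LinearPMap.adjoint_isFormalAdjoint S.dense_Agam y, inner_conj_symm]

lemma Amin'_le_Agam_adjoint : S.Amin' ≤ S.Agam† :=
  LinearPMap.IsFormalAdjoint.le_adjoint S.dense_Agam fun x y => by
    rw [LinearPMap.apply_eq_of_le S.Agam_le_max]
    exact LinearPMap.adjoint_isFormalAdjoint S.dense_Amin' _ y

lemma dense_Agam_adjoint : Dense (S.Agam†.domain : Set H) :=
  S.dense_Amin'.mono S.Amin'_le_Agam_adjoint.1

lemma Agam_le_adjoint_adjoint : S.Agam ≤ S.Agam†† :=
  LinearPMap.IsFormalAdjoint.le_adjoint S.dense_Agam_adjoint fun x y => by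
    rw [← inner_conj_symm, ← LinearPMap.adjoint_isFormalAdjoint S.dense_Agam x, inner_conj_symm]

def dual : Setup H where
  Amin := S.Amin'
  Amin' := S.Amin
  closed_Amin := S.closed_Amin'
  closed_Amin' := S.closed_Amin
  dense_Amin := S.dense_Amin'
  dense_Amin' := S.dense_Amin
  Amin_le_max := S.Amin'_le_max'
  Amin'_le_max' := S.Amin_le_max
  Agam := S.Agam†
  Amin_le_Agam := S.Amin'_le_Agam_adjoint
  Agam_le_max := S.Agam_adjoint_le_Amax'
  Agaminv := S.Agamstarinv
  Agaminv_mem := S.Agamstarinv_mem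
  Agaminv_left := S.Agamstarinv_left
  Agaminv_right := S.Agamstarinv_right
  Agamstarinv := S.Agaminv
  Agamstarinv_mem f := S.Agam_le_adjoint_adjoint.1 (S.Agaminv_mem f)
  Agamstarinv_left v := by
    have hv := LinearPMap.mem_graph_of_inner_adjoint_eq S.isClosed_Agam S.dense_Agam
      (u := (v : H)) (f := S.Agam†† v) fun w =>
        (LinearPMap.adjoint_isFormalAdjoint S.dense_Agam_adjoint).symm w v
    obtain ⟨x, hx, hAx⟩ := S.Agam.mem_graph_iff.mp hv
    exact (congrArg S.Agaminv hAx).symm.trans ((S.Agaminv_left x).trans hx)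
  Agamstarinv_right f := by
    rw [← LinearPMap.apply_eq_of_le S.Agam_le_adjoint_adjoint ⟨_, S.Agaminv_mem f⟩,
      S.Agaminv_right]

lemma Agaminv_mem_Amax (f : H) : S.Agaminv f ∈ S.Amax.domain :=
  S.Agam_le_max.1 (S.Agaminv_mem f)

lemma Amax_Agaminv_s15 (f : H) : S.Amax ⟨S.Agaminv f, S.Agaminv_mem_Amax f⟩ = f :=
  (LinearPMap.apply_eq_of_le S.Agam_le_max ⟨_, S.Agaminv_mem f⟩).symm.trans (S.Agaminv_right f)

lemma inner_Agamstarinv (f g : H) :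
    inner ℂ f (S.Agamstarinv g) = inner ℂ (S.Agaminv f) g := by
  have h := LinearPMap.adjoint_isFormalAdjoint S.dense_Agam
    ⟨S.Agamstarinv g, S.Agamstarinv_mem g⟩ ⟨S.Agaminv f, S.Agaminv_mem f⟩
  rw [S.Agamstarinv_right, S.Agaminv_right] at h
  rw [← inner_conj_symm, ← h, inner_conj_symm]

lemma mem_Zker_iff {z : H} : z ∈ S.Zker ↔ ∃ h : z ∈ S.Amax.domain, S.Amax ⟨z, h⟩ = 0 := by
  constructor
  · rintro ⟨y, hy, rfl⟩
    exact ⟨y.2, hy⟩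
  · rintro ⟨h, h0⟩
    exact ⟨⟨z, h⟩, h0, rfl⟩

lemma uzeta_mem_Zker (u : S.Amax.domain) : S.uzeta u ∈ S.Zker := by
  let g : S.Amax.domain := ⟨_, S.Agaminv_mem_Amax (S.Amax u)⟩
  refine S.mem_Zker_iff.mpr ⟨(u - g).2, ?_⟩
  change S.Amax (u - g) = 0
  rw [LinearPMap.map_sub, S.Amax_Agaminv_s15, sub_self]

lemma vzeta_mem_Zker' (v : S.Amax'.domain) : S.vzeta v ∈ S.Zker' :=
  S.dual.uzeta_mem_Zker v

lemma Amin_mem_orthogonal_Zker' (u : S.Amin.domain) : S.Amin u ∈ S.Zker'ᗮ := by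
  refine (Submodule.mem_orthogonal _ _).mpr fun w hw => ?_
  obtain ⟨hw, hw0⟩ := S.dual.mem_Zker_iff.mp hw
  rw [← LinearPMap.adjoint_isFormalAdjoint S.dense_Amin ⟨w, hw⟩ u,
    show S.Amin† ⟨w, hw⟩ = 0 from hw0, inner_zero_left]

theorem green_formula (u : S.Amax.domain) (v : S.Amax'.domain) :
    inner ℂ (S.Amax u) (v : H) - inner ℂ (u : H) (S.Amax' v) =
      inner ℂ (S.projZ' (S.Amax u)) (S.vzeta v) -
        inner ℂ (S.uzeta u) (S.projZ (S.Amax' v)) := by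
  rw [projZ', inner_projCl_left_of_mem _ _ (S.vzeta_mem_Zker' v), projZ,
    inner_projCl_right_of_mem _ _ (S.uzeta_mem_Zker u)]
  simp only [uzeta, vzeta, inner_sub_left, inner_sub_right, inner_Agamstarinv]
  ring

theorem exists_boundary_eq {z' z : H} (hz' : z' ∈ S.Zker') (hz : z ∈ S.Zker) :
    ∃ u : S.Amax.domain, S.projZ' (S.Amax u) = z' ∧ S.uzeta u = z := by
  obtain ⟨hzm, hz0⟩ := S.mem_Zker_iff.mp hz
  let u : S.Amax.domain := ⟨S.Agaminv z', S.Agaminv_mem_Amax z'⟩ + ⟨z, hzm⟩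
  have hu : S.Amax u = z' := by rw [LinearPMap.map_add, S.Amax_Agaminv_s15, hz0, add_zero]
  refine ⟨u, ?_, ?_⟩
  · rw [hu]
    exact projCl_apply_of_mem _ hz'
  · change (u : H) - S.Agaminv (S.Amax u) = z
    rw [hu]
    exact add_sub_cancel_left _ _

theorem boundary_eq_zero_iff (u : S.Amax.domain) :
    S.projZ' (S.Amax u) = 0 ∧ S.uzeta u = 0 ↔ (u : H) ∈ S.Amin.domain := by
  constructor
  · rintro ⟨h₁, h₀⟩
    refine LinearPMap.mem_domain_of_mem_graph
      (LinearPMap.mem_graph_of_inner_adjoint_eq S.closed_Amin S.dense_Amin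
        (f := S.Amax u) fun v => ?_)
    have h := S.green_formula u v
    rw [h₁, h₀, inner_zero_left, inner_zero_left, sub_zero, sub_eq_zero] at h
    rw [← inner_conj_symm (v : H), h, inner_conj_symm]
    rfl
  · intro hu
    have hAmin : S.Amin ⟨u, hu⟩ = S.Amax u := LinearPMap.apply_eq_of_le S.Amin_le_Amax ⟨u, hu⟩
    have hAgam : S.Agam ⟨u, S.Amin_le_Agam.1 hu⟩ = S.Amax u :=
      LinearPMap.apply_eq_of_le S.Agam_le_max ⟨u, _⟩
    refine ⟨(projCl_apply_eq_zero_iff _).mpr (hAmin ▸ S.Amin_mem_orthogonal_Zker' ⟨u, hu⟩), ?_⟩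
    change (u : H) - S.Agaminv (S.Amax u) = 0
    rw [← hAgam, S.Agaminv_left, sub_self]

end Setup

theorem statement_15 (S : Setup H) :
    (∀ p : H × H, p.1 ∈ S.Zker' → p.2 ∈ S.Zker →
      ∃ u : S.Amax.domain, S.projZ' (S.Amax u) = p.1 ∧ S.uzeta u = p.2) ∧
    (∀ u : S.Amax.domain,
      (S.projZ' (S.Amax u) = 0 ∧ S.uzeta u = 0) ↔ (u : H) ∈ S.Amin.domain) ∧
    (∀ p : H × H, p.1 ∈ S.Zker → p.2 ∈ S.Zker' →
      ∃ v : S.Amax'.domain, S.projZ (S.Amax' v) = p.1 ∧ S.vzeta v = p.2) ∧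
    (∀ v : S.Amax'.domain,
      (S.projZ (S.Amax' v) = 0 ∧ S.vzeta v = 0) ↔ (v : H) ∈ S.Amin'.domain) ∧
    ∀ (u : S.Amax.domain) (v : S.Amax'.domain),
      (inner ℂ (S.Amax u) (v : H) : ℂ) - (inner ℂ (u : H) (S.Amax' v) : ℂ) =
        (inner ℂ (S.projZ' (S.Amax u)) (S.vzeta v) : ℂ) -
          (inner ℂ (S.uzeta u) (S.projZ (S.Amax' v)) : ℂ) :=
  ⟨fun _ hz' hz => S.exists_boundary_eq hz' hz, S.boundary_eq_zero_iff,
    fun _ hz hz' => S.dual.exists_boundary_eq hz hz', S.dual.boundary_eq_zero_iff,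
    S.green_formula⟩

end GrubbExt
end
end
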